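/- arXiv:0911.0517 — 7 statements merged into one kernel-verified Lean document; each statement's English description precedes it below -/
import Mathlib

section
/- If q alternatives with probabilities μ_1 ≥ μ_2 ≥ ... ≥ μ_q ≥ 0 summing to 1 are given, then 1 - μ_1 ≤ (q/2)·Σ_{a=1}^q μ_a(1-μ_a). -/
open Finset
open scoped Classical

/-- `Ranking q` is the set `L_q` of total orderings (permutations) of the `q` alternatives;
`x k` is the alternative ranked in position `k` (position `0` is the top). -/
abbrev Ranking (q : ℕ) := Equiv.Perm (Fin q)

/-- A voting profile: one ranking for each of the `n` voters. -/
abbrev Profile (n q : ℕ) := Fin n → Ranking q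

/-- Uniform probability of an event on a finite type. -/
noncomputable def prob {α : Type*} [Fintype α] (P : α → Prop) : ℝ :=
  ((Finset.univ.filter P).card : ℝ) / (Fintype.card α : ℝ)

/-- `Prefers x a b`: the ranking `x` ranks alternative `a` strictly above `b`. -/
def Prefers {q : ℕ} (x : Ranking q) (a b : Fin q) : Prop :=
  x.symm a < x.symm b

/-- `mu f a = P(f(X) = a)` for `X` uniform. -/
noncomputable def mu {n q : ℕ} (f : Profile n q → Fin q) (a : Fin q) : ℝ :=
  prob (fun x : Profile n q => f x = a)

/-- Statistical distance between two social choice functions. -/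
noncomputable def distF {n q : ℕ} (f g : Profile n q → Fin q) : ℝ :=
  prob (fun x : Profile n q => f x ≠ g x)

/-- `Inf_i^a(f) = P(f(X) = a, f(X^{(i)}) ≠ a)`, where `X^{(i)}` re-randomizes coordinate `i`. -/
noncomputable def infA {n q : ℕ} (f : Profile n q → Fin q) (i : Fin n) (a : Fin q) : ℝ :=
  prob (fun p : Profile n q × Ranking q =>
    f p.1 = a ∧ f (Function.update p.1 i p.2) ≠ a)

/-- `Inf_i^{a,b}(f) = P(f(X) = a, f(X^{(i)}) = b)`. -/
noncomputable def infAB {n q : ℕ} (f : Profile n q → Fin q) (i : Fin n) (a b : Fin q) : ℝ :=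
  prob (fun p : Profile n q × Ranking q =>
    f p.1 = a ∧ f (Function.update p.1 i p.2) = b)

/-- The adjacent transposition `[a:b]` applied to a ranking `x`: exchanges `a` and `b`
if they occupy adjacent positions in `x`, and does nothing otherwise. -/
noncomputable def adjTrans {q : ℕ} (a b : Fin q) (x : Ranking q) : Ranking q :=
  if ((x.symm a : ℕ) + 1 = (x.symm b : ℕ) ∨ (x.symm b : ℕ) + 1 = (x.symm a : ℕ))
  then x * Equiv.swap (x.symm a) (x.symm b) else x

/-- `Inf_i^{a;z}(f)` for `z` the adjacent transposition `[c:d]`: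
`(1/2)·P(f(X) = a, f([c:d]_i X) ≠ a)`. -/
noncomputable def infAz {n q : ℕ} (f : Profile n q → Fin q) (i : Fin n) (a c d : Fin q) : ℝ :=
  (1 / 2) * prob (fun x : Profile n q =>
    f x = a ∧ f (Function.update x i (adjTrans c d (x i))) ≠ a)

/-- `Inf_i^{a,b;[a:b]}(f) = (1/2)·P(f(X) = a, f([a:b]_i X) = b)`. -/
noncomputable def infABadj {n q : ℕ} (f : Profile n q → Fin q) (i : Fin n) (a b : Fin q) : ℝ :=
  (1 / 2) * prob (fun x : Profile n q =>
    f x = a ∧ f (Function.update x i (adjTrans a b (x i))) = b)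

/-- An edge of the refined graph on rankings: `y` is obtained from `x` by swapping the
alternatives in two adjacent positions. -/
def AdjStep {q : ℕ} (x y : Ranking q) : Prop :=
  ∃ (k : ℕ) (h : k + 1 < q),
    y = x * Equiv.swap ⟨k, Nat.lt_of_succ_lt h⟩ ⟨k + 1, h⟩

/-- `f` is manipulable at `x`. -/
def IsManip {n q : ℕ} (f : Profile n q → Fin q) (x : Profile n q) : Prop :=
  ∃ (i : Fin n) (y : Profile n q),
    (∀ j, j ≠ i → y j = x j) ∧ Prefers (x i) (f y) (f x)

/-- `y` is obtained from `x` by permuting (at most) `r` adjacent alternatives, i.e. `y`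
agrees with `x` outside a window of `r` consecutive positions. -/
def AdjBlockPerm {q : ℕ} (r : ℕ) (x y : Ranking q) : Prop :=
  ∃ s : ℕ, ∀ k : Fin q, ¬ (s ≤ (k : ℕ) ∧ (k : ℕ) < s + r) → y k = x k

/-- `x` is an `r`-manipulation point of `f`. -/
def IsRManip {n q : ℕ} (f : Profile n q → Fin q) (r : ℕ) (x : Profile n q) : Prop :=
  ∃ (i : Fin n) (y : Profile n q),
    (∀ j, j ≠ i → y j = x j) ∧ AdjBlockPerm r (x i) (y i) ∧
      Prefers (x i) (f y) (f x)

/-- `g` depends on at most the `i`-th coordinate for some `i` (the class `DICT`). -/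
def IsDictator {n q : ℕ} (g : Profile n q → Fin q) : Prop :=
  ∃ i : Fin n, ∀ x y : Profile n q, x i = y i → g x = g y

/-- `g` takes at most two values. -/
def TakesAtMostTwoValues {n q : ℕ} (g : Profile n q → Fin q) : Prop :=
  ∃ a b : Fin q, ∀ x, g x = a ∨ g x = b

/-- `f` is neutral: it commutes with every renaming `σ` of the alternatives. -/
def Neutral {n q : ℕ} (f : Profile n q → Fin q) : Prop :=
  ∀ (σ : Ranking q) (x : Profile n q), f (fun k => σ * x k) = σ (f x)

/-- `Shifted c u w`: the ranking `w` equals `u` except that the position of the single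
alternative `c` may have been shifted arbitrarily (all other alternatives keep their
relative order). -/
def Shifted {q : ℕ} (c : Fin q) (u w : Ranking q) : Prop :=
  ∀ e e' : Fin q, e ≠ c → e' ≠ c → (Prefers u e e' ↔ Prefers w e e')

theorem one_sub_le_sum_mul_one_sub {ι : Type*} [Fintype ι] {μ : ι → ℝ} {i : ι}
    (hnonneg : ∀ a, 0 ≤ μ a) (hsum : ∑ a, μ a = 1) (hmax : ∀ a, μ a ≤ μ i) :
    1 - μ i ≤ ∑ a, μ a * (1 - μ a) :=
  calc 1 - μ i = ∑ a, μ a * (1 - μ i) := by rw [← sum_mul, hsum, one_mul]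
    _ ≤ ∑ a, μ a * (1 - μ a) :=
      sum_le_sum fun a _ => mul_le_mul_of_nonneg_left (by linarith [hmax a]) (hnonneg a)

/-- for a probability vector `μ_1 ≥ μ_2 ≥ ... ≥ μ_q ≥ 0` summing to `1`,
`1 - μ_1 ≤ (q/2)·Σ_a μ_a(1-μ_a)`. -/
theorem one_sub_max_le_half_q_total_variance (q : ℕ) (hq : 0 < q) (μ : Fin q → ℝ)
    (hsorted : Antitone μ) (hnonneg : ∀ a, 0 ≤ μ a) (hsum : ∑ a : Fin q, μ a = 1) :
    1 - μ ⟨0, hq⟩ ≤ (q : ℝ) / 2 * ∑ a : Fin q, μ a * (1 - μ a) := by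
  have hmax : ∀ a, μ a ≤ μ ⟨0, hq⟩ := fun a => hsorted (Nat.zero_le a.val)
  have hvar := one_sub_le_sum_mul_one_sub hnonneg hsum hmax
  have hle_one : μ ⟨0, hq⟩ ≤ 1 := hsum ▸ single_le_sum (fun a _ => hnonneg a) (mem_univ _)
  have hvar_nonneg : 0 ≤ ∑ a : Fin q, μ a * (1 - μ a) := (sub_nonneg.2 hle_one).trans hvar
  obtain rfl | hq2 : q = 1 ∨ 2 ≤ q := by omega
  · have hμ : μ ⟨0, hq⟩ = 1 := by simpa using hsum
    rw [hμ, sub_self]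
    exact mul_nonneg (by positivity) hvar_nonneg
  · have one_le_half_q : (1 : ℝ) ≤ q / 2 := by
      rw [le_div_iff₀ two_pos]
      exact_mod_cast hq2
    exact hvar.trans (le_mul_of_one_le_left hvar_nonneg one_le_half_q)
end

section
/- Let H be a group acting freely (fixed-point-freely) on a set L, let L_1, L_2 ⊆ L with H·L_1 = L_1 and H·L_2 = L_2, and let Γ : L_1 × L_2 → paths in L of length at most ℓ be an H-invariant canonical path map (Γ(hx, hy) = h·Γ(x,y) for all h ∈ H). Then for every z ∈ L and every 0 ≤ i ≤ ℓ, the number of pairs (x,y) ∈ L_1 × L_2 whose canonical path has length ≥ i and whose i-th vertex equals z is at most |L_1|·|L_2|/|H|. -/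
open Finset
open scoped Classical

/-! The map `(h, (x, y)) ↦ (h • x, h • y)` is injective on `H × Γ_i⁻¹(z)`: by invariance the
`i`-th vertex of `Γ (h • x) (h • y)` is `h • z`, and freeness recovers `h` from `h • z`. Its image
lies in `L1 × L2`, so `|H| · |Γ_i⁻¹(z)| ≤ |L1| · |L2|`. -/

theorem Finset.card_mul_card_le_of_fiber_of_equivariant {H α β : Type*} [Group H] [Fintype H]
    [MulAction H α] [MulAction H β] {S T : Finset α} (f : α → β) {z : β}
    (hz : Function.Injective fun h : H => h • z)
    (hf : ∀ h : H, ∀ p ∈ S, f (h • p) = h • f p) (hfS : ∀ p ∈ S, f p = z)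
    (hST : ∀ h : H, ∀ p ∈ S, h • p ∈ T) :
    Fintype.card H * #S ≤ #T := by
  have hinj : Set.InjOn (fun q : H × α => q.1 • q.2) (univ ×ˢ S : Finset (H × α)) := by
    rintro ⟨h₁, p₁⟩ hp₁ ⟨h₂, p₂⟩ hp₂ heq
    simp only [coe_product, coe_univ, Set.mem_prod, Set.mem_univ, true_and, mem_coe] at hp₁ hp₂ heq
    have hh : h₁ = h₂ := hz <| by
      simpa only [hf h₁ p₁ hp₁, hf h₂ p₂ hp₂, hfS p₁ hp₁, hfS p₂ hp₂] using congrArg f heq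
    subst hh
    rw [smul_left_cancel h₁ heq]
  simpa only [card_product, card_univ] using
    card_le_card_of_injOn _ (fun q hq => hST q.1 q.2 (mem_product.1 hq).2) hinj

theorem List.getElem?_map_smul {H α : Type*} [SMul H α] (h : H) (l : List α) (i : ℕ) :
    (l.map (h • ·))[i]? = h • l[i]? := by
  rw [List.getElem?_map, Option.smul_def]

theorem canonical_path_group_action_pointwise_general {L H : Type*} [DecidableEq L] [Fintype H] [Group H]
    [MulAction H L]
    (hfree : ∀ (h : H) (x : L), h • x = x → h = 1)
    (L1 L2 : Finset L)
    (hL1 : ∀ (h : H), ∀ x ∈ L1, h • x ∈ L1)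
    (hL2 : ∀ (h : H), ∀ x ∈ L2, h • x ∈ L2)
    (Γ : L → L → List L)
    (hinv : ∀ (h : H), ∀ x ∈ L1, ∀ y ∈ L2,
      Γ (h • x) (h • y) = (Γ x y).map (fun v => h • v))
    (z : L) (i : ℕ) :
    ((((L1 ×ˢ L2).filter (fun p : L × L => (Γ p.1 p.2)[i]? = some z)).card : ℝ))
      ≤ (L1.card : ℝ) * (L2.card : ℝ) / (Fintype.card H : ℝ) := by
  have : IsCancelSMul H L := isCancelSMul_iff_eq_one_of_smul_eq.2 hfree
  have hz : Function.Injective fun h : H => h • some z := fun h₁ h₂ heq =>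
    IsCancelSMul.right_cancel h₁ h₂ z (Option.some_injective _ heq)
  have hcount := card_mul_card_le_of_fiber_of_equivariant (fun p : L × L => (Γ p.1 p.2)[i]?) hz
    (fun h p hp => by
      obtain ⟨hx, hy⟩ := mem_product.1 (mem_filter.1 hp).1
      exact (congrArg (·[i]?) (hinv h _ hx _ hy)).trans (List.getElem?_map_smul h _ i))
    (fun p hp => (mem_filter.1 hp).2)
    (fun h p hp => by
      obtain ⟨hx, hy⟩ := mem_product.1 (mem_filter.1 hp).1
      exact mem_product.2 ⟨hL1 h _ hx, hL2 h _ hy⟩)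
  rw [card_product] at hcount
  rw [le_div_iff₀ (by exact_mod_cast Fintype.card_pos), mul_comm]
  exact_mod_cast hcount

/-- for a fixed-point-free action of `H` on `L` and an `H`-invariant canonical
path map `Γ : L1 × L2 → P_L(ℓ)` (paths recorded as their lists of vertices, so a path of
length at most `ℓ` has at most `ℓ + 1` vertices), the number of pairs whose path has `i`-th
vertex equal to `z` is at most `|L1|·|L2|/|H|`. -/
theorem canonical_path_group_action_pointwise {L H : Type*} [Fintype L] [DecidableEq L] [Fintype H] [Group H]
    [MulAction H L]
    (hfree : ∀ (h : H) (x : L), h • x = x → h = 1)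
    (L1 L2 : Finset L)
    (hL1 : ∀ (h : H), ∀ x ∈ L1, h • x ∈ L1)
    (hL2 : ∀ (h : H), ∀ x ∈ L2, h • x ∈ L2)
    (ℓ : ℕ) (Γ : L → L → List L)
    (hstart : ∀ x ∈ L1, ∀ y ∈ L2, (Γ x y).head? = some x)
    (hend : ∀ x ∈ L1, ∀ y ∈ L2, (Γ x y).getLast? = some y)
    (hlen : ∀ x ∈ L1, ∀ y ∈ L2, (Γ x y).length ≤ ℓ + 1)
    (hinv : ∀ (h : H), ∀ x ∈ L1, ∀ y ∈ L2,
      Γ (h • x) (h • y) = (Γ x y).map (fun v => h • v))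
    (z : L) (i : ℕ) (hi : i ≤ ℓ) :
    ((((L1 ×ˢ L2).filter (fun p : L × L => (Γ p.1 p.2)[i]? = some z)).card : ℝ))
      ≤ (L1.card : ℝ) * (L2.card : ℝ) / (Fintype.card H : ℝ) :=
  canonical_path_group_action_pointwise_general hfree L1 L2 hL1 hL2 Γ hinv z i
end

section
/- Under the hypotheses of the previous statement (H fixed-point-free acting on L, Γ an H-invariant canonical path map from L_1 to L_2 of length at most ℓ), for every z ∈ L the total number of pairs (x,y) whose canonical path passes through z (at any position 0 ≤ i ≤ ℓ) is at most (ℓ+1)·|L_1|·|L_2|/|H|. -/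
open Finset
open scoped Classical

/-!
A pair whose canonical path visits `z` does so at some step `i ≤ ℓ`, so it suffices to show
that for each `i` at most `|L₁|·|L₂|/|H|` pairs have `z` at step `i` of their path. If
`h • p = h' • p'` for two such pairs, invariance of `Γ` puts `(h'⁻¹ * h) • z` at step `i` of the
path of `p'`, where `z` sits; freeness forces `h = h'` and `p = p'`. So the `|H|` translates of
these pairs are distinct elements of `L₁ × L₂`.
-/

section EquivariantFiber

variable {H α β : Type*} [Group H] [Fintype H] [MulAction H α] [MulAction H β]
  [DecidableEq β]

theorem card_fiber_mul_card_le_of_equivariant (s : Finset α)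
    (hs : ∀ h : H, ∀ a ∈ s, h • a ∈ s) (f : α → β) (hf : ∀ h : H, ∀ a ∈ s, f (h • a) = h • f a)
    {b : β} (hb : ∀ h : H, h • b = b → h = 1) :
    #(s.filter (f · = b)) * Fintype.card H ≤ #s := by
  rw [← card_univ, ← card_product]
  refine card_le_card_of_injOn (fun q => q.2 • q.1) (fun q hq => ?_) ?_
  · exact hs q.2 q.1 (mem_filter.1 (mem_product.1 hq).1).1
  rintro ⟨a, h⟩ hq ⟨a', h'⟩ hq' heq
  simp only [coe_product, Set.mem_prod, mem_coe, mem_filter, mem_univ, and_true] at hq hq'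
  have hmove : (h'⁻¹ * h) • a = a' := by
    rw [mul_smul, inv_smul_eq_iff]
    exact heq
  have hfix : (h'⁻¹ * h) • b = b := by
    rw [← hq.2, ← hf _ a hq.1, hmove, hq'.2, hq.2]
  obtain rfl : h = h' := (inv_mul_eq_one.1 (hb _ hfix)).symm
  rw [inv_mul_cancel, one_smul] at hmove
  rw [hmove]

end EquivariantFiber

theorem card_filter_mem_le_sum_card_filter_getElem? {α β : Type*} [DecidableEq β] (s : Finset α)
    (Γ : α → List β) (n : ℕ) (hlen : ∀ a ∈ s, (Γ a).length ≤ n) (z : β) :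
    #(s.filter (z ∈ Γ ·)) ≤ ∑ i ∈ range n, #(s.filter (fun a => (Γ a)[i]? = some z)) := by
  refine (card_le_card fun a ha => ?_).trans card_biUnion_le
  obtain ⟨has, hz⟩ := mem_filter.1 ha
  obtain ⟨i, hi, rfl⟩ := List.mem_iff_getElem.1 hz
  exact mem_biUnion.2 ⟨i, mem_range.2 (hi.trans_le (hlen a has)),
    mem_filter.2 ⟨has, List.getElem?_eq_getElem hi⟩⟩

theorem canonical_path_group_action_total_general {L H : Type*} [DecidableEq L] [Fintype H] [Group H]
    [MulAction H L]
    (hfree : ∀ (h : H) (x : L), h • x = x → h = 1)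
    (L1 L2 : Finset L)
    (hL1 : ∀ (h : H), ∀ x ∈ L1, h • x ∈ L1)
    (hL2 : ∀ (h : H), ∀ x ∈ L2, h • x ∈ L2)
    (ℓ : ℕ) (Γ : L → L → List L)
    (hlen : ∀ x ∈ L1, ∀ y ∈ L2, (Γ x y).length ≤ ℓ + 1)
    (hinv : ∀ (h : H), ∀ x ∈ L1, ∀ y ∈ L2,
      Γ (h • x) (h • y) = (Γ x y).map (fun v => h • v))
    (z : L) :
    ((((L1 ×ˢ L2).filter (fun p : L × L => z ∈ Γ p.1 p.2)).card : ℝ))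
      ≤ ((ℓ : ℝ) + 1) * (L1.card : ℝ) * (L2.card : ℝ) / (Fintype.card H : ℝ) := by
  have hS : ∀ h : H, ∀ p ∈ L1 ×ˢ L2, h • p ∈ L1 ×ˢ L2 := fun h p hp =>
    mem_product.2 ⟨hL1 h _ (mem_product.1 hp).1, hL2 h _ (mem_product.1 hp).2⟩
  have hstep : ∀ i : ℕ, #((L1 ×ˢ L2).filter (fun p => (Γ p.1 p.2)[i]? = some z)) * Fintype.card H
      ≤ #L1 * #L2 := fun i => by
    rw [← card_product]
    refine card_fiber_mul_card_le_of_equivariant _ hS (fun p => (Γ p.1 p.2)[i]?)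
      (fun h p hp => ?_) (fun h hz => hfree h z (Option.some_injective _ hz))
    rw [Prod.smul_fst, Prod.smul_snd, hinv h _ (mem_product.1 hp).1 _ (mem_product.1 hp).2,
      List.getElem?_map, Option.smul_def]
  have hsum := card_filter_mem_le_sum_card_filter_getElem? (L1 ×ˢ L2) (fun p => Γ p.1 p.2)
    (ℓ + 1) (fun p hp => hlen _ (mem_product.1 hp).1 _ (mem_product.1 hp).2) z
  have htotal : #((L1 ×ˢ L2).filter (fun p : L × L => z ∈ Γ p.1 p.2)) * Fintype.card H
      ≤ (ℓ + 1) * (#L1 * #L2) :=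
    calc _ ≤ (∑ i ∈ range (ℓ + 1), #((L1 ×ˢ L2).filter (fun p => (Γ p.1 p.2)[i]? = some z)))
          * Fintype.card H := Nat.mul_le_mul_right _ hsum
      _ ≤ ∑ _i ∈ range (ℓ + 1), #L1 * #L2 := by
          rw [sum_mul]
          exact sum_le_sum fun i _ => hstep i
      _ = (ℓ + 1) * (#L1 * #L2) := by rw [sum_const, card_range, smul_eq_mul]
  rw [le_div_iff₀ (by exact_mod_cast Fintype.card_pos), mul_assoc _ (L1.card : ℝ)]
  exact_mod_cast htotal

/-- under the same hypotheses, the total number of pairs whose canonical path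
passes through `z` is at most `(ℓ+1)·|L1|·|L2|/|H|`. -/
theorem canonical_path_group_action_total {L H : Type*} [Fintype L] [DecidableEq L] [Fintype H] [Group H]
    [MulAction H L]
    (hfree : ∀ (h : H) (x : L), h • x = x → h = 1)
    (L1 L2 : Finset L)
    (hL1 : ∀ (h : H), ∀ x ∈ L1, h • x ∈ L1)
    (hL2 : ∀ (h : H), ∀ x ∈ L2, h • x ∈ L2)
    (ℓ : ℕ) (Γ : L → L → List L)
    (hstart : ∀ x ∈ L1, ∀ y ∈ L2, (Γ x y).head? = some x)
    (hend : ∀ x ∈ L1, ∀ y ∈ L2, (Γ x y).getLast? = some y)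
    (hlen : ∀ x ∈ L1, ∀ y ∈ L2, (Γ x y).length ≤ ℓ + 1)
    (hinv : ∀ (h : H), ∀ x ∈ L1, ∀ y ∈ L2,
      Γ (h • x) (h • y) = (Γ x y).map (fun v => h • v))
    (z : L) :
    ((((L1 ×ˢ L2).filter (fun p : L × L => z ∈ Γ p.1 p.2)).card : ℝ))
      ≤ ((ℓ : ℝ) + 1) * (L1.card : ℝ) * (L2.card : ℝ) / (Fintype.card H : ℝ) :=
  canonical_path_group_action_total_general hfree L1 L2 hL1 hL2 ℓ Γ hlen hinv z
end

section
/- For any social choice function f : L_q^n → [q], any alternative a ∈ [q] and any voter i ∈ [n], Σ_{z ∈ T} Inf_i^{a;z}(f) ≥ (1/q²)·Inf_i^a(f), where T is the set of all q(q-1)/2 adjacent transpositions. -/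
open Finset
open scoped Classical

/-! Write the re-randomized ranking as `x i * ρ` and factor `ρ` into at most `q(q-1)/2` adjacent
position swaps (bubble sort: each swap at a descent removes one inversion). Walking from `x i` to
`x i * ρ` one swap at a time, the outcome must leave `a` at some step, and a position swap applied
to the current ranking is the adjacent transposition `[c:d]` of the two alternatives it exchanges.
Since right multiplication by a fixed prefix of the word is a bijection of profiles, each of the at
most `q(q-1)/2` steps costs at most `2 Σ_z Inf_i^{a;z}(f)`, whence
`Inf_i^a(f) ≤ q(q-1) Σ_z Inf_i^{a;z}(f)`. -/

open Equiv Function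

section Inversions

variable {α : Type*} [Fintype α] [LinearOrder α]

def invCount (ρ : Perm α) : ℕ :=
  #{p : α × α | p.1 < p.2 ∧ ρ p.2 < ρ p.1}

theorem invCount_le_choose_two (ρ : Perm α) : invCount ρ ≤ (Fintype.card α).choose 2 := by
  rw [← Fintype.card_product_filter_lt]
  exact card_le_card fun p hp => by simp only [mem_filter] at hp ⊢; exact ⟨hp.1, hp.2.1⟩

end Inversions

section AdjacentSwaps

variable {m : ℕ}

def adjSwap (k : Fin m) : Perm (Fin (m + 1)) :=
  swap k.castSucc k.succ

theorem adjSwap_lt_adjSwap (k : Fin m) {x y : Fin (m + 1)} (hxy : x < y)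
    (hne : (x, y) ≠ (k.castSucc, k.succ)) : adjSwap k x < adjSwap k y := by
  have hne' : ¬((x : ℕ) = k ∧ (y : ℕ) = k + 1) := by
    rintro ⟨h1, h2⟩; exact hne (Prod.ext (Fin.ext h1) (Fin.ext h2))
  simp only [adjSwap, swap_apply_def]
  split_ifs <;> simp only [Fin.lt_def, Fin.ext_iff, Fin.val_castSucc, Fin.val_succ] at * <;> omega

theorem invCount_mul_adjSwap_lt {ρ : Perm (Fin (m + 1))} {k : Fin m}
    (hk : ρ k.succ < ρ k.castSucc) : invCount (ρ * adjSwap k) < invCount ρ := by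
  set s := adjSwap k
  have hs : ∀ x, s (s x) = x := swap_apply_self _ _
  have hmem :
      (k.castSucc, k.succ) ∈ ({p : _ × _ | p.1 < p.2 ∧ ρ p.2 < ρ p.1} : Finset _) := by
    simp only [mem_filter, mem_univ, true_and]
    exact ⟨Fin.castSucc_lt_succ, hk⟩
  refine (card_le_card_of_injOn (fun p => (s p.1, s p.2)) ?_ ?_).trans_lt
    (card_erase_lt_of_mem hmem)
  · rintro ⟨x, y⟩ hp
    rw [mem_coe, mem_filter] at hp
    simp only [mem_univ, true_and, Perm.mul_apply] at hp
    simp only [mem_coe, mem_erase, mem_filter, mem_univ, true_and]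
    have hne : (x, y) ≠ (k.castSucc, k.succ) := by
      rintro ⟨⟩
      exact hk.not_gt (by simpa [s, adjSwap] using hp.2)
    refine ⟨fun h => ?_, adjSwap_lt_adjSwap k hp.1 hne, hp.2⟩
    simp only [Prod.mk.injEq] at h
    have hx : x = k.succ := by rw [← hs x, h.1]; exact swap_apply_left _ _
    have hy : y = k.castSucc := by rw [← hs y, h.2]; exact swap_apply_right _ _
    exact Fin.castSucc_lt_succ.not_gt (hx ▸ hy ▸ hp.1)
  · rintro ⟨x, y⟩ - ⟨x', y'⟩ - h
    simp only [Prod.mk.injEq, s.injective.eq_iff] at h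
    rw [h.1, h.2]

theorem exists_descent_of_ne_one {ρ : Perm (Fin (m + 1))} (hρ : ρ ≠ 1) :
    ∃ k : Fin m, ρ k.succ < ρ k.castSucc := by
  by_contra! h
  have hmono : StrictMono ρ := Fin.strictMono_iff_lt_succ.2 fun k =>
    (h k).lt_of_ne (ρ.injective.ne Fin.castSucc_lt_succ.ne)
  exact hρ (Perm.ext fun x => congrFun hmono.eq_id x)

theorem exists_adjSwap_word (ρ : Perm (Fin (m + 1))) :
    ∃ l : List (Fin m), (l.map adjSwap).prod = ρ ∧ l.length ≤ invCount ρ := by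
  induction h : invCount ρ using Nat.strong_induction_on generalizing ρ with
  | _ N ih =>
    by_cases hρ : ρ = 1
    · exact ⟨[], by simp [hρ], by simp⟩
    obtain ⟨k, hk⟩ := exists_descent_of_ne_one hρ
    obtain ⟨l, hl, hlen⟩ := ih _ (h ▸ invCount_mul_adjSwap_lt hk) (ρ * adjSwap k) rfl
    refine ⟨l ++ [k], ?_, ?_⟩
    · simp [hl, mul_assoc, adjSwap]
    · simp only [List.length_append, List.length_singleton]
      have := invCount_mul_adjSwap_lt hk
      omega

end AdjacentSwaps

section AdjacentTranspositions

variable {m : ℕ}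

theorem adjTrans_comm {q : ℕ} (c d : Fin q) (w : Ranking q) :
    adjTrans c d w = adjTrans d c w := by
  unfold adjTrans
  by_cases h : (w.symm c : ℕ) + 1 = w.symm d ∨ (w.symm d : ℕ) + 1 = w.symm c
  · rw [if_pos h, if_pos h.symm, swap_comm]
  · rw [if_neg h, if_neg (mt Or.symm h)]

theorem adjTrans_apply_eq_mul_adjSwap (w : Ranking (m + 1)) (k : Fin m) :
    adjTrans (w k.castSucc) (w k.succ) w = w * adjSwap k := by
  simp [adjTrans, adjSwap]

theorem exists_adjTrans_eq_mul_adjSwap (w : Ranking (m + 1)) (k : Fin m) :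
    ∃ c d, c < d ∧ adjTrans c d w = w * adjSwap k := by
  have hne : w k.castSucc ≠ w k.succ := w.injective.ne Fin.castSucc_lt_succ.ne
  rcases hne.lt_or_gt with hlt | hgt
  · exact ⟨_, _, hlt, adjTrans_apply_eq_mul_adjSwap w k⟩
  · exact ⟨_, _, hgt, (adjTrans_comm _ _ w).trans (adjTrans_apply_eq_mul_adjSwap w k)⟩

theorem exists_adjTrans_crossing (Q : Ranking (m + 1) → Prop) (l : List (Fin m))
    {u : Ranking (m + 1)} (hu : Q u) (hv : ¬Q (u * (l.map adjSwap).prod)) :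
    ∃ t < l.length, ∃ c d, c < d ∧ Q (u * ((l.take t).map adjSwap).prod) ∧
      ¬Q (adjTrans c d (u * ((l.take t).map adjSwap).prod)) := by
  induction l generalizing u with
  | nil => simp_all
  | cons k l ih =>
    obtain ⟨c, d, hcd, hw⟩ := exists_adjTrans_eq_mul_adjSwap u k
    by_cases hk : Q (u * adjSwap k)
    · rw [List.map_cons, List.prod_cons, ← mul_assoc] at hv
      obtain ⟨t, ht, c, d, hcd, h⟩ := ih hk hv
      refine ⟨t + 1, by simpa using ht, c, d, hcd, ?_⟩
      simpa [mul_assoc] using h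
    · exact ⟨0, by simp, c, d, hcd, by simpa using hu, by simpa [hw] using hk⟩

end AdjacentTranspositions

section Counting

variable {ι : Type*} [DecidableEq ι]

theorem update_self_map_injective {β : Type*} (i : ι) {φ : β → β} (hφ : Injective φ) :
    Injective fun x : ι → β => update x i (φ (x i)) := by
  intro x y h
  have hi : x i = y i := hφ (by simpa using congrFun h i)
  funext j
  rcases eq_or_ne j i with rfl | hj
  · exact hi
  · simpa [hj] using congrFun h j

variable [Fintype ι]

noncomputable def adjBoundary {q : ℕ} (P : (ι → Ranking q) → Prop) [DecidablePred P] (i : ι)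
    (c d : Fin q) : Finset (ι → Ranking q) :=
  {x | P x ∧ ¬P (update x i (adjTrans c d (x i)))}

theorem card_filter_not_update_mul_le {m : ℕ} (P : (ι → Ranking (m + 1)) → Prop)
    [DecidablePred P] (i : ι) {ρ : Ranking (m + 1)} {l : List (Fin m)}
    (hl : (l.map adjSwap).prod = ρ) :
    #{x | P x ∧ ¬P (update x i (x i * ρ))} ≤
      l.length * ∑ p ∈ ({p | p.1 < p.2} : Finset (Fin (m + 1) × Fin (m + 1))),
        #(adjBoundary P i p.1 p.2) := by
  set π : ℕ → Ranking (m + 1) := fun t => ((l.take t).map adjSwap).prod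
  set B := ({p | p.1 < p.2} : Finset (Fin (m + 1) × Fin (m + 1))).biUnion
    fun p => adjBoundary P i p.1 p.2
  have hcover : ({x | P x ∧ ¬P (update x i (x i * ρ))} : Finset (ι → Ranking (m + 1))) ⊆
      (range l.length).biUnion fun t => {x | update x i (x i * π t) ∈ B} := by
    intro x hx
    rw [mem_filter] at hx
    obtain ⟨t, ht, c, d, hcd, hQ, hnQ⟩ := exists_adjTrans_crossing (fun w => P (update x i w)) l
      (u := x i) (by simpa using hx.2.1) (by simpa [hl] using hx.2.2)
    simp only [mem_biUnion, mem_range, mem_filter, mem_univ, true_and, B, adjBoundary]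
    exact ⟨t, ht, (c, d), hcd, hQ, by rwa [update_idem, update_self]⟩
  calc #{x | P x ∧ ¬P (update x i (x i * ρ))}
      ≤ ∑ t ∈ range l.length, #{x | update x i (x i * π t) ∈ B} :=
        (card_le_card hcover).trans card_biUnion_le
    _ ≤ ∑ t ∈ range l.length, #B := sum_le_sum fun t _ =>
        card_le_card_of_injOn _ (fun x hx => by simpa using hx)
          (update_self_map_injective i (mul_left_injective (π t))).injOn
    _ ≤ _ := by
        rw [sum_const, card_range, smul_eq_mul]
        exact Nat.mul_le_mul_left _ card_biUnion_le

end Counting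

theorem card_update_boundary_le {ι : Type*} [Fintype ι] [DecidableEq ι] {q : ℕ}
    (P : (ι → Ranking q) → Prop) [DecidablePred P] (i : ι) :
    #{z : (ι → Ranking q) × Ranking q | P z.1 ∧ ¬P (update z.1 i z.2)} ≤
      q.factorial * q.choose 2 * ∑ p ∈ ({p | p.1 < p.2} : Finset (Fin q × Fin q)),
        #(adjBoundary P i p.1 p.2) := by
  rcases q with _ | m
  · refine (Nat.le_zero.2 (card_eq_zero.2 (filter_eq_empty_iff.2 ?_))).trans (Nat.zero_le _)
    rintro ⟨x, y⟩ - ⟨hx, hy⟩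
    exact hy (by rwa [Subsingleton.elim (update x i y) x])
  have hshear : #{z : (ι → Ranking (m + 1)) × _ | P z.1 ∧ ¬P (update z.1 i z.2)} =
      #{z : (ι → Ranking (m + 1)) × _ | P z.1 ∧ ¬P (update z.1 i (z.1 i * z.2))} :=
    card_equiv (prodShear (Equiv.refl _) fun x => Equiv.mulLeft (x i)⁻¹) fun z => by simp
  set S := ∑ p ∈ ({p | p.1 < p.2} : Finset (Fin (m + 1) × Fin (m + 1))),
    #(adjBoundary P i p.1 p.2)
  calc _ = ∑ ρ : Ranking (m + 1), #{x | P x ∧ ¬P (update x i (x i * ρ))} := by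
        rw [hshear, card_filter, Fintype.sum_prod_type_right]
        simp only [card_filter]
    _ ≤ ∑ _ρ : Ranking (m + 1), (m + 1).choose 2 * S := sum_le_sum fun ρ _ => by
        obtain ⟨l, hl, hlen⟩ := exists_adjSwap_word ρ
        refine (card_filter_not_update_mul_le P i hl).trans (Nat.mul_le_mul_right _ ?_)
        simpa using hlen.trans (invCount_le_choose_two ρ)
    _ = _ := by
        rw [sum_const, card_univ, Fintype.card_perm, Fintype.card_fin, smul_eq_mul, mul_assoc]

theorem infAz_eq_card_adjBoundary {n q : ℕ} (f : Profile n q → Fin q) (i : Fin n)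
    (a c d : Fin q) :
    infAz f i a c d = #(adjBoundary (f · = a) i c d) / (2 * Fintype.card (Profile n q)) := by
  rw [infAz, prob, adjBoundary, one_div_mul_eq_div, div_div, mul_comm]
  congr!

theorem infA_eq_card {n q : ℕ} (f : Profile n q → Fin q) (i : Fin n) (a : Fin q) :
    infA f i a = #{z : Profile n q × Ranking q | f z.1 = a ∧ ¬f (update z.1 i z.2) = a} /
      (Fintype.card (Profile n q) * q.factorial) := by
  rw [infA, prob, Fintype.card_prod, Fintype.card_perm, Fintype.card_fin, Nat.cast_mul]
  congr!

/-- `Σ_{z ∈ T} Inf_i^{a;z}(f) ≥ (1/q²)·Inf_i^a(f)`, where `T` is the set of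
all `q(q-1)/2` adjacent transpositions `[c:d]`, indexed by pairs `c < d`. -/
theorem sum_infAz_ge_infA (n q : ℕ) (f : Profile n q → Fin q) (a : Fin q) (i : Fin n) :
    ∑ p ∈ Finset.univ.filter (fun p : Fin q × Fin q => p.1 < p.2),
        infAz f i a p.1 p.2
      ≥ (1 / (q : ℝ) ^ 2) * infA f i a := by
  have hcount :
      (#{z : Profile n q × Ranking q | f z.1 = a ∧ ¬f (update z.1 i z.2) = a} : ℝ) ≤
      q.factorial * q.choose 2 * ∑ p ∈ ({p | p.1 < p.2} : Finset (Fin q × Fin q)),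
        (#(adjBoundary (f · = a) i p.1 p.2) : ℝ) := by
    exact_mod_cast card_update_boundary_le (f · = a) i
  have hq : (0 : ℝ) < q := Nat.cast_pos.2 (Fin.pos a)
  have hchoose : 2 * (q.choose 2 : ℝ) ≤ (q : ℝ) ^ 2 := by
    rw [Nat.cast_choose_two]; nlinarith
  have hC : (0 : ℝ) < Fintype.card (Profile n q) := Nat.cast_pos.2 Fintype.card_pos
  have hR : (0 : ℝ) < q.factorial := Nat.cast_pos.2 q.factorial_pos
  simp only [infAz_eq_card_adjBoundary, infA_eq_card, ← sum_div]
  rw [ge_iff_le, one_div_mul_eq_div, div_div, div_le_div_iff₀ (by positivity) (by positivity)]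
  set S := ∑ p ∈ ({p | p.1 < p.2} : Finset (Fin q × Fin q)),
    (#(adjBoundary (f · = a) i p.1 p.2) : ℝ)
  have hS : 0 ≤ S := sum_nonneg fun _ _ => Nat.cast_nonneg _
  calc _ ≤ q.factorial * q.choose 2 * S * (2 * Fintype.card (Profile n q)) := by gcongr
    _ = S * (Fintype.card (Profile n q) * q.factorial * (2 * q.choose 2)) := by ring
    _ ≤ _ := by gcongr
end

section
/- Fix a,b ∈ [q] and let B ⊆ L_q be the set of permutations ranking a above b. There exists a canonical path map Γ : B × B → paths in B of length at most q², whose edges are adjacent transpositions and whose vertices all rank a above b, such that for every z ∈ B the number of pairs whose canonical path passes through z is at most q⁴·q!. -/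
open Finset
open scoped Classical

/-!
Bubble sort from `x` to `y` only ever swaps an adjacent pair that `y` ranks the other way, so it
never separates a pair on which `x` and `y` agree (such as `a` above `b`), and it takes at most
`q²` steps. Taking the path from `x` to `y` to be the bubble sort path from `1` to `x⁻¹ * y`
translated by `x`, a pair `(x, y)` whose path passes through `z` is recovered from `x⁻¹ * y` and
the position of `z` on the path; hence at most `q! · (q² + 1) ≤ q⁴ · q!` pairs use `z`.
-/

section BubbleSort

variable {q : ℕ}

@[simp]
lemma prefers_apply_apply (u : Ranking q) (i j : Fin q) : Prefers u (u i) (u j) ↔ i < j := by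
  simp [Prefers]

lemma Prefers.asymm {u : Ranking q} {c d : Fin q} (h : Prefers u c d) :
    ¬Prefers u d c :=
  lt_asymm h

lemma prefers_mul_iff (x w : Ranking q) (c d : Fin q) :
    Prefers (x * w) c d ↔ Prefers w (x⁻¹ c) (x⁻¹ d) :=
  Iff.rfl

lemma AdjStep.mul_left {u v : Ranking q} (h : AdjStep u v) (x : Ranking q) :
    AdjStep (x * u) (x * v) := by
  obtain ⟨k, hk, rfl⟩ := h
  exact ⟨k, hk, mul_assoc _ _ _⟩

lemma adjStep_mul_swap (u : Ranking q) {i j : Fin q} (hij : (i : ℕ) + 1 = j) :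
    AdjStep u (u * Equiv.swap i j) := by
  obtain ⟨i, hi⟩ := i
  obtain ⟨j, hj⟩ := j
  subst hij
  exact ⟨i, hj, rfl⟩

lemma swap_apply_lt_swap_apply {i j c d : Fin q} (hij : (i : ℕ) + 1 = j) (hcd : c < d)
    (hne : (c, d) ≠ (i, j)) : Equiv.swap i j c < Equiv.swap i j d := by
  rw [Fin.lt_def] at hcd ⊢
  rw [Ne, Prod.mk.injEq, Fin.ext_iff, Fin.ext_iff] at hne
  simp only [Equiv.swap_apply_def]
  split_ifs <;> simp only [Fin.ext_iff] at * <;> omega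

lemma prefers_mul_swap {u : Ranking q} {i j : Fin q} (hij : (i : ℕ) + 1 = j) {c d : Fin q}
    (h : Prefers u c d) (hne : (c, d) ≠ (u i, u j)) : Prefers (u * Equiv.swap i j) c d := by
  obtain ⟨c, rfl⟩ := u.surjective c
  obtain ⟨d, rfl⟩ := u.surjective d
  rw [prefers_apply_apply] at h
  have hne' : (c, d) ≠ (i, j) := fun he => hne (by simp_all)
  rw [prefers_mul_iff]
  simpa [Prefers] using swap_apply_lt_swap_apply hij h hne'

-- If `v` inverts no adjacent pair of `u`, then `v⁻¹ * u` is a strictly monotone permutation.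
lemma exists_adjacent_inversion {u v : Ranking q} (huv : u ≠ v) :
    ∃ i j : Fin q, (i : ℕ) + 1 = j ∧ Prefers v (u j) (u i) := by
  by_contra! hsorted
  let f : Ranking q := u.trans v.symm
  have hmono : StrictMono f := by
    cases q with
    | zero => exact fun k => k.elim0
    | succ n =>
      refine Fin.strictMono_iff_lt_succ.2 fun k => ?_
      have hne : f k.castSucc ≠ f k.succ := f.injective.ne (Fin.castSucc_lt_succ (i := k)).ne
      exact (hne.lt_or_gt).resolve_right (hsorted _ _ rfl)
  have hf : hmono.orderIsoOfSurjective f f.surjective = OrderIso.refl _ :=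
    Subsingleton.elim _ _
  refine huv (Equiv.ext fun k => ?_)
  exact v.symm_apply_eq.1 (DFunLike.congr_fun hf k)

noncomputable def discordantPairs (u v : Ranking q) : Finset (Fin q × Fin q) :=
  univ.filter fun p => Prefers u p.1 p.2 ∧ Prefers v p.2 p.1

lemma mem_discordantPairs {u v : Ranking q} {c d : Fin q} :
    (c, d) ∈ discordantPairs u v ↔ Prefers u c d ∧ Prefers v d c := by
  simp [discordantPairs]

lemma card_discordantPairs_le (u v : Ranking q) : #(discordantPairs u v) ≤ q ^ 2 := by
  calc #(discordantPairs u v) ≤ #(univ : Finset (Fin q × Fin q)) := card_filter_le _ _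
    _ = q ^ 2 := by simp [sq]

lemma discordantPairs_mul_swap_ssubset {u v : Ranking q} {i j : Fin q}
    (hij : (i : ℕ) + 1 = j) (hinv : Prefers v (u j) (u i)) :
    discordantPairs (u * Equiv.swap i j) v ⊂ discordantPairs u v := by
  have hij' : i < j := Fin.lt_def.2 (by omega)
  have hsub : discordantPairs (u * Equiv.swap i j) v ⊆ discordantPairs u v := by
    rintro ⟨c, d⟩ hcd
    rw [mem_discordantPairs] at hcd ⊢
    refine ⟨?_, hcd.2⟩
    rw [← Equiv.mul_swap_mul_self i j u]
    refine prefers_mul_swap hij hcd.1 fun he => ?_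
    simp only [Equiv.Perm.coe_mul, Function.comp_apply, Equiv.swap_apply_left,
      Equiv.swap_apply_right, Prod.mk.injEq] at he
    exact hinv.asymm (he.1 ▸ he.2 ▸ hcd.2)
  refine (ssubset_iff_of_subset hsub).2 ⟨(u i, u j), ?_, ?_⟩
  · exact mem_discordantPairs.2 ⟨(prefers_apply_apply u i j).2 hij', hinv⟩
  · rw [mem_discordantPairs, not_and]
    have hi : (u * Equiv.swap i j) j = u i := by simp
    have hj : (u * Equiv.swap i j) i = u j := by simp
    rw [← hi, ← hj, prefers_apply_apply]
    exact fun h => absurd h hij'.not_gt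

theorem exists_adjStep_path (u v : Ranking q) :
    ∃ l : List (Ranking q), l.head? = some u ∧ l.getLast? = some v ∧
      l.length ≤ #(discordantPairs u v) + 1 ∧ l.IsChain AdjStep ∧
      ∀ w ∈ l, ∀ c d, Prefers u c d → Prefers v c d → Prefers w c d := by
  induction hn : #(discordantPairs u v) using Nat.strong_induction_on generalizing u with
  | _ n ih =>
  by_cases huv : u = v
  · subst huv
    exact ⟨[u], rfl, rfl, by simp, List.isChain_singleton u, by simp⟩
  obtain ⟨i, j, hij, hinv⟩ := exists_adjacent_inversion huv
  set u' := u * Equiv.swap i j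
  have hlt : #(discordantPairs u' v) < n :=
    hn ▸ card_lt_card (discordantPairs_mul_swap_ssubset hij hinv)
  obtain ⟨l, hhead, hlast, hlen, hchain, hbetween⟩ := ih _ hlt u' rfl
  have hagree : ∀ c d, Prefers u c d → Prefers v c d → Prefers u' c d := by
    refine fun c d hu hv => prefers_mul_swap hij hu fun he => ?_
    simp only [Prod.mk.injEq] at he
    exact hinv.asymm (he.1 ▸ he.2 ▸ hv)
  refine ⟨u :: l, rfl, ?_, ?_, ?_, ?_⟩
  · rw [List.getLast?_cons, hlast]
    rfl
  · simp only [List.length_cons]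
    omega
  · refine List.isChain_cons.2 ⟨fun w hw => ?_, hchain⟩
    rw [hhead, Option.mem_some_iff] at hw
    exact hw ▸ adjStep_mul_swap u hij
  · rintro w (_ | ⟨_, hw⟩) c d hu hv
    · exact hu
    · exact hbetween w hw c d (hagree c d hu hv) hv

end BubbleSort

theorem card_filter_mem_map_mul_le {G : Type*} [Group G] [Fintype G] [DecidableEq G]
    (P : G → List G) {L : ℕ} (hP : ∀ σ, (P σ).length ≤ L) (z : G) :
    #(univ.filter fun p : G × G => z ∈ (P (p.1⁻¹ * p.2)).map (p.1 * ·)) ≤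
      Fintype.card G * L := by
  let recover : G × ℕ → G × G := fun ⟨σ, i⟩ =>
    (z * ((P σ).getD i 1)⁻¹, z * ((P σ).getD i 1)⁻¹ * σ)
  have hsub : (univ.filter fun p : G × G => z ∈ (P (p.1⁻¹ * p.2)).map (p.1 * ·)) ⊆
      (univ ×ˢ range L).image recover := by
    rintro ⟨x, y⟩ hxy
    obtain ⟨w, hw, rfl⟩ := List.mem_map.1 (mem_filter.1 hxy).2
    obtain ⟨i, hi, rfl⟩ := List.mem_iff_getElem.1 hw
    refine mem_image.2 ⟨(x⁻¹ * y, i), by simpa using hi.trans_le (hP _), ?_⟩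
    simp [recover, hi]
  calc _ ≤ #((univ ×ˢ range L).image recover) := card_le_card hsub
    _ ≤ #(univ ×ˢ range L) := card_image_le
    _ = Fintype.card G * L := by simp

/-- fixing `a, b`, on the set `B` of rankings placing `a` above `b` there is a
canonical path map of length at most `q²` whose edges are adjacent transpositions, staying
inside `B`, such that each `z ∈ B` lies on at most `q⁴·q!` canonical paths. -/
theorem exists_canonical_path_map_above (q : ℕ) (a b : Fin q) (hab : a ≠ b) :
    ∃ Γ : Ranking q → Ranking q → List (Ranking q),
      (∀ x y : Ranking q, Prefers x a b → Prefers y a b →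
        (Γ x y).head? = some x ∧
        (Γ x y).getLast? = some y ∧
        (Γ x y).length ≤ q ^ 2 + 1 ∧
        List.Chain' AdjStep (Γ x y) ∧
        (∀ v ∈ Γ x y, Prefers v a b)) ∧
      (∀ z : Ranking q, Prefers z a b →
        (((Finset.univ.filter (fun p : Ranking q × Ranking q =>
            Prefers p.1 a b ∧ Prefers p.2 a b ∧ z ∈ Γ p.1 p.2)).card : ℝ))
          ≤ (q : ℝ) ^ 4 * (Nat.factorial q : ℝ)) := by
  choose P hP using exists_adjStep_path (1 : Ranking q)
  have hlen σ : (P σ).length ≤ q ^ 2 + 1 :=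
    (hP σ).2.2.1.trans (Nat.add_le_add_right (card_discordantPairs_le 1 σ) 1)
  refine ⟨fun x y => (P (x⁻¹ * y)).map (x * ·), fun x y hx hy => ?_, fun z _ => ?_⟩
  · obtain ⟨hhead, hlast, -, hchain, hbetween⟩ := hP (x⁻¹ * y)
    refine ⟨by simp [hhead], by simp [hlast], by simpa using hlen _,
      List.isChain_map _ |>.2 (hchain.imp fun u v h => h.mul_left x), ?_⟩
    simp only [List.mem_map]
    rintro _ ⟨w, hw, rfl⟩
    exact hbetween w hw _ _ hx (by simpa [prefers_mul_iff] using hy)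
  have hq : q ^ 2 + 1 ≤ q ^ 4 := by
    have hq2 : 2 ≤ q := by have := Fin.val_ne_of_ne hab; omega
    have : 2 ^ 2 ≤ q ^ 2 := Nat.pow_le_pow_left hq2 2
    calc q ^ 2 + 1 ≤ q ^ 2 * q ^ 2 := by nlinarith
      _ = q ^ 4 := by ring
  have hcount := card_filter_mem_map_mul_le P hlen z
  rw [Fintype.card_perm, Fintype.card_fin] at hcount
  refine (Nat.cast_le.2 ((card_le_card (monotone_filter_right _
    fun _ _ (hp : _ ∧ _ ∧ _) => hp.2.2)).trans hcount)).trans ?_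
  rw [mul_comm]
  exact_mod_cast Nat.mul_le_mul_right _ hq
end

section
/- Let f : L_q^n → [q] be a social choice function, a ≠ b ∈ [q], and suppose (x,y) ∈ B_i^{a,b;T}(f), i.e. f(x) = a, f(y) = b, x agrees with y off coordinate i, and x_i = z·y_i for some adjacent transposition z with x_i ≠ y_i. Then either x_i and y_i differ by the adjacent transposition of a and b, or one of x, y is a 2-manipulation point of f. -/
open Finset
open scoped Classical

/-!
If `x_i = z·y_i` for an adjacent transposition `z`, then `x_i` and `y_i` differ by permuting two
adjacent positions, so each of `x`, `y` is a 2-step deviation of the other. Voter `i` manipulates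
at `x` unless `x_i` ranks `a = f(x)` above `b = f(y)`, and at `y` unless `y_i` ranks `b` above `a`.
In the remaining case `z` reverses the relative order of `a` and `b`; since swapping two adjacent
positions reverses only the pair occupying them, `z` exchanges exactly `a` and `b`.
-/

theorem CovBy.eq_of_swap_apply_lt_swap_apply {α : Type*} [LinearOrder α] [DecidableEq α]
    {p q s t : α} (hpq : p ⋖ q) (hst : s < t) (h : Equiv.swap p q t < Equiv.swap p q s) :
    s = p ∧ t = q := by
  have := hpq.1
  have := hpq.2
  simp only [Equiv.swap_apply_def] at h
  split_ifs at h <;> grind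

section Rankings

variable {q : ℕ}

theorem adjTrans_comm_s8 (a b : Fin q) (u : Ranking q) : adjTrans a b u = adjTrans b a u := by
  unfold adjTrans
  simp only [or_comm, Equiv.swap_comm]

theorem AdjBlockPerm.symm {r : ℕ} {u v : Ranking q} (h : AdjBlockPerm r u v) :
    AdjBlockPerm r v u :=
  let ⟨s, hs⟩ := h
  ⟨s, fun k hk => (hs k hk).symm⟩

theorem adjBlockPerm_two_adjTrans (c d : Fin q) (u : Ranking q) :
    AdjBlockPerm 2 u (adjTrans c d u) := by
  unfold adjTrans
  split_ifs with hadj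
  · refine ⟨min (u.symm c : ℕ) (u.symm d), fun k hk => ?_⟩
    rw [Equiv.Perm.mul_apply, Equiv.swap_apply_of_ne_of_ne] <;> rintro rfl <;> omega
  · exact ⟨0, fun _ _ => rfl⟩

theorem Prefers.of_not_prefers {u : Ranking q} {a b : Fin q} (hab : a ≠ b)
    (h : ¬ Prefers u b a) : Prefers u a b :=
  lt_of_le_of_ne (not_lt.1 h) (u.symm.injective.ne hab)

theorem adjTrans_eq_of_prefers_reversed {a b c d : Fin q} {u : Ranking q}
    (hu : Prefers u b a) (hv : Prefers (adjTrans c d u) a b) :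
    adjTrans c d u = adjTrans a b u := by
  unfold adjTrans at hv
  split_ifs at hv with hcd
  swap
  · exact absurd hu (lt_asymm hv)
  change Equiv.swap (u.symm c) (u.symm d) (u.symm a) < Equiv.swap (u.symm c) (u.symm d) (u.symm b)
    at hv
  obtain hcd | hdc := hcd
  · have hcov := Fin.covBy_iff.2 (Nat.covBy_iff_add_one_eq.2 hcd)
    obtain ⟨hb, ha⟩ := hcov.eq_of_swap_apply_lt_swap_apply hu hv
    rw [u.symm.injective ha, u.symm.injective hb, adjTrans_comm_s8]
  · have hcov := Fin.covBy_iff.2 (Nat.covBy_iff_add_one_eq.2 hdc)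
    rw [Equiv.swap_comm] at hv
    obtain ⟨hb, ha⟩ := hcov.eq_of_swap_apply_lt_swap_apply hu hv
    rw [u.symm.injective ha, u.symm.injective hb]

end Rankings

theorem boundary_adjTrans_or_two_manip_general (n q : ℕ) (f : Profile n q → Fin q)
    (a b : Fin q) (hab : a ≠ b) (i : Fin n) (x y : Profile n q)
    (hfx : f x = a) (hfy : f y = b)
    (hoff : ∀ j, j ≠ i → x j = y j)
    (hadj : ∃ c d : Fin q, c ≠ d ∧ x i = adjTrans c d (y i)) :
    x i = adjTrans a b (y i) ∨ IsRManip f 2 x ∨ IsRManip f 2 y := by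
  obtain ⟨c, d, -, hx⟩ := hadj
  have hblock : AdjBlockPerm 2 (y i) (x i) := hx ▸ adjBlockPerm_two_adjTrans c d (y i)
  by_cases hxba : Prefers (x i) b a
  · exact Or.inr (Or.inl ⟨i, y, fun j hj => (hoff j hj).symm, hblock.symm, hfx ▸ hfy ▸ hxba⟩)
  by_cases hyab : Prefers (y i) a b
  · exact Or.inr (Or.inr ⟨i, x, hoff, hblock, hfx ▸ hfy ▸ hyab⟩)
  have hxab : Prefers (adjTrans c d (y i)) a b := hx ▸ Prefers.of_not_prefers hab hxba
  exact Or.inl (hx.trans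
    (adjTrans_eq_of_prefers_reversed (Prefers.of_not_prefers hab.symm hyab) hxab))

/-- if `(x,y) ∈ B_i^{a,b;T}(f)` then either `x_i = [a:b]·y_i`, or one of
`x, y` is a `2`-manipulation point of `f`. -/
theorem boundary_adjTrans_or_two_manip (n q : ℕ) (f : Profile n q → Fin q)
    (a b : Fin q) (hab : a ≠ b) (i : Fin n) (x y : Profile n q)
    (hfx : f x = a) (hfy : f y = b)
    (hoff : ∀ j, j ≠ i → x j = y j)
    (hadj : ∃ c d : Fin q, c ≠ d ∧ x i = adjTrans c d (y i))
    (hne : x i ≠ y i) :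
    x i = adjTrans a b (y i) ∨ IsRManip f 2 x ∨ IsRManip f 2 y :=
  boundary_adjTrans_or_two_manip_general n q f a b hab i x y hfx hfy hoff hadj
end

section
/- Let f : L_q^n → [q], and let x,y,z ∈ L_q^n with (x,y) ∈ B_i^{a,b;T}(f) and (z,y) ∈ B_j^{c,b;T}(f), where a,b,c are distinct alternatives and i ≠ j. Then there exists a 3-manipulation point w of f such that w agrees with y on all coordinates outside {i,j}, w_i equals x_i or y_i except possibly with the position of c shifted arbitrarily, and w_j equals z_j or y_j except possibly with the position of a shifted arbitrarily. -/
/-!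
Take the boundary edge `y → x` in coordinate `i`. If neither endpoint is a manipulation point,
voter `i` prefers `b` to `a` at `y` and `a` to `b` at `x`; since `x i` is an adjacent swap of
`y i`, the swapped pair must be `{a, b}`, and the swap leaves the relative order of every other
alternative with everything unchanged. Likewise the edge `y → z` swaps `{b, c}` in coordinate `j`.
Now let `v` be `x` with `z j` in coordinate `j`. If `f v = a`, the edge `z → v` in coordinate `i`
has outcomes `c` and `a`, and voter `i` compares `c` with `a` the same way at both ends, so one
end is a manipulation point. Otherwise the edge `x → v` in coordinate `j` has outcomes `a` and
`f v`, compared the same way at both ends, with the same conclusion.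
-/

open Finset
open scoped Classical

open Equiv

/-- A transposition of adjacent positions reverses only the comparison of those two positions;
so if it reverses `m' < m`, it preserves every comparison involving a third position. -/
lemma swap_lt_swap_iff_of_flip {q : ℕ} {s t m m' p p' : Fin q} (hst : (t : ℕ) = s + 1)
    (hm : m' < m) (hswap : swap s t m < swap s t m') (hpm : p ≠ m) (hpm' : p ≠ m') :
    swap s t p < swap s t p' ↔ p < p' := by
  simp only [swap_apply_def, Fin.ext_iff, Fin.lt_def] at *
  split_ifs at * <;> omega

namespace AdjStep

variable {q : ℕ} {r r' : Ranking q}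

lemma symm (h : AdjStep r r') : AdjStep r' r := by
  obtain ⟨k, hk, rfl⟩ := h
  exact ⟨k, hk, by rw [mul_assoc, swap_mul_self, mul_one]⟩

lemma adjBlockPerm (h : AdjStep r r') {s : ℕ} (hs : 2 ≤ s) : AdjBlockPerm s r r' := by
  obtain ⟨k, hk, rfl⟩ := h
  refine ⟨k, fun m hm => ?_⟩
  rw [Perm.mul_apply, swap_apply_of_ne_of_ne] <;> simp only [ne_eq, Fin.ext_iff] <;> omega

lemma prefers_iff_of_flip {a b e : Fin q} (h : AdjStep r r') (hba : Prefers r b a)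
    (hab : Prefers r' a b) (hea : e ≠ a) (heb : e ≠ b) (d : Fin q) :
    Prefers r' e d ↔ Prefers r e d := by
  obtain ⟨k, hk, rfl⟩ := h
  simp only [Prefers, Perm.mul_def, symm_trans_apply, symm_swap] at hab ⊢
  exact swap_lt_swap_iff_of_flip rfl hba hab (r.symm.injective.ne hea) (r.symm.injective.ne heb)

end AdjStep

lemma adjStep_adjTrans {q : ℕ} {u v : Fin q} {r : Ranking q} (h : adjTrans u v r ≠ r) :
    AdjStep r (adjTrans u v r) := by
  unfold adjTrans at *
  split_ifs at * with hadj
  · rcases hadj with hadj | hadj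
    · exact ⟨r.symm u, hadj ▸ (r.symm v).isLt, by congr; ext; simp [hadj]⟩
    · exact ⟨r.symm v, hadj ▸ (r.symm u).isLt, by rw [swap_comm]; congr; ext; simp [hadj]⟩
  · exact absurd rfl h

lemma prefers_of_not_prefers {q : ℕ} {x : Ranking q} {a b : Fin q} (hab : a ≠ b)
    (h : ¬ Prefers x b a) : Prefers x a b :=
  lt_of_le_of_ne (not_lt.mp h) (x.symm.injective.ne hab)

section Edge

variable {n q r : ℕ} {f : Profile n q → Fin q} {i : Fin n} {p p' : Profile n q}

lemma isRManip_of_adjStep (hr : 2 ≤ r) (hoff : ∀ k, k ≠ i → p' k = p k)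
    (hs : AdjStep (p i) (p' i)) (hp : Prefers (p i) (f p') (f p)) : IsRManip f r p :=
  ⟨i, p', hoff, hs.adjBlockPerm hr, hp⟩

lemma isRManip_or_prefers_of_adjStep (hr : 2 ≤ r) (hoff : ∀ k, k ≠ i → p' k = p k)
    (hs : AdjStep (p i) (p' i)) (hne : f p ≠ f p') :
    IsRManip f r p ∨ IsRManip f r p' ∨
      (Prefers (p i) (f p) (f p') ∧ Prefers (p' i) (f p') (f p)) := by
  by_cases h : Prefers (p i) (f p') (f p)
  · exact .inl (isRManip_of_adjStep hr hoff hs h)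
  by_cases h' : Prefers (p' i) (f p) (f p')
  · exact .inr (.inl (isRManip_of_adjStep hr (fun k hk => (hoff k hk).symm) hs.symm h'))
  exact .inr (.inr ⟨prefers_of_not_prefers hne h, prefers_of_not_prefers hne.symm h'⟩)

lemma isRManip_of_adjStep_of_flip {a b : Fin q} (hr : 2 ≤ r)
    (hoff : ∀ k, k ≠ i → p' k = p k) (hs : AdjStep (p i) (p' i)) (hba : Prefers (p i) b a) (hab : Prefers (p' i) a b)
    (ha : f p ≠ a) (hb : f p ≠ b) (hne : f p ≠ f p') :
    IsRManip f r p ∨ IsRManip f r p' := by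
  rcases isRManip_or_prefers_of_adjStep hr hoff hs hne with h | h | ⟨hp, hp'⟩
  · exact .inl h
  · exact .inr h
  · have := (hs.prefers_iff_of_flip hba hab ha hb (f p')).mpr hp
    exact absurd hp' (lt_asymm this)

end Edge

theorem isRManip_corner_of_flips {n q r : ℕ} {f : Profile n q → Fin q} {a b c : Fin q}
    (hr : 2 ≤ r) (hab : a ≠ b) (hbc : b ≠ c) (hac : a ≠ c) {i j : Fin n} (hij : i ≠ j)
    {x y z : Profile n q} (hfx : f x = a) (hfz : f z = c)
    (hxy_off : ∀ k, k ≠ i → x k = y k) (hzy_off : ∀ k, k ≠ j → z k = y k)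
    (hx : AdjStep (y i) (x i)) (hz : AdjStep (y j) (z j))
    (hyi : Prefers (y i) b a) (hxi : Prefers (x i) a b)
    (hyj : Prefers (y j) b c) (hzj : Prefers (z j) c b) :
    IsRManip f r x ∨ IsRManip f r z ∨ IsRManip f r (Function.update x j (z j)) := by
  set v := Function.update x j (z j)
  have hvi : v i = x i := Function.update_of_ne hij _ _
  have hvj : v j = z j := Function.update_self _ _ _
  have hvx : ∀ k, k ≠ j → v k = x k := fun k hk => Function.update_of_ne hk _ _
  by_cases hva : f v = a
  · -- the edge `z → v` in coordinate `i` flips `b, a`, and `f z = c` is neither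
    have hvz : ∀ k, k ≠ i → v k = z k := fun k hk => by
      rcases eq_or_ne k j with rfl | hkj
      · exact hvj
      · rw [hvx k hkj, hxy_off k hk, hzy_off k hkj]
    have hzi : z i = y i := hzy_off i hij
    rcases isRManip_of_adjStep_of_flip hr hvz (by rwa [hzi, hvi]) (by rwa [hzi]) (by rwa [hvi])
      (hfz ▸ hac.symm) (hfz ▸ hbc.symm) (by rw [hfz, hva]; exact hac.symm) with h | h
    · exact .inr (.inl h)
    · exact .inr (.inr h)
  · -- the edge `x → v` in coordinate `j` flips `b, c`, and `f x = a` is neither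
    have hxj : x j = y j := hxy_off j hij.symm
    rcases isRManip_of_adjStep_of_flip hr hvx (by rwa [hxj, hvj]) (by rwa [hxj]) (by rwa [hvj])
      (hfx ▸ hac) (hfx ▸ hab) (by rw [hfx]; exact Ne.symm hva) with h | h
    · exact .inl h
    · exact .inr (.inr h)

theorem isRManip_of_adjStep_square {n q r : ℕ} {f : Profile n q → Fin q} {a b c : Fin q}
    (hr : 2 ≤ r) (hab : a ≠ b) (hbc : b ≠ c) (hac : a ≠ c) {i j : Fin n} (hij : i ≠ j)
    {x y z : Profile n q} (hfx : f x = a) (hfy : f y = b) (hfz : f z = c)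
    (hxy_off : ∀ k, k ≠ i → x k = y k) (hzy_off : ∀ k, k ≠ j → z k = y k)
    (hx : AdjStep (y i) (x i)) (hz : AdjStep (y j) (z j)) :
    IsRManip f r x ∨ IsRManip f r y ∨ IsRManip f r z ∨
      IsRManip f r (Function.update x j (z j)) := by
  rcases isRManip_or_prefers_of_adjStep (f := f) hr hxy_off hx (by rw [hfy, hfx]; exact hab.symm)
    with h | h | ⟨hyi, hxi⟩
  · exact .inr (.inl h)
  · exact .inl h
  rcases isRManip_or_prefers_of_adjStep (f := f) hr hzy_off hz (by rw [hfy, hfz]; exact hbc)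
    with h | h | ⟨hyj, hzj⟩
  · exact .inr (.inl h)
  · exact .inr (.inr (.inl h))
  rw [hfx, hfy] at hyi hxi
  rw [hfz, hfy] at hyj hzj
  rcases isRManip_corner_of_flips hr hab hbc hac hij hfx hfz hxy_off hzy_off hx hz hyi hxi hyj hzj
    with h | h | h
  · exact .inl h
  · exact .inr (.inr (.inl h))
  · exact .inr (.inr (.inr h))

lemma shifted_of_eq {q : ℕ} {c : Fin q} {u w : Ranking q} (h : u = w) : Shifted c u w :=
  fun _ _ _ _ => h ▸ Iff.rfl

/-- if `(x,y) ∈ B_i^{a,b;T}(f)` and `(z,y) ∈ B_j^{c,b;T}(f)` with `a,b,c`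
distinct and `i ≠ j`, there is a `3`-manipulation point `w` agreeing with `y` outside
`{i,j}`, with `w_i` equal to `x_i` or `y_i` up to an arbitrary shift of the position of
`c`, and `w_j` equal to `z_j` or `y_j` up to an arbitrary shift of the position of `a`. -/
theorem boundary_pair_three_manip (n q : ℕ) (f : Profile n q → Fin q)
    (a b c : Fin q) (hab : a ≠ b) (hbc : b ≠ c) (hac : a ≠ c)
    (i j : Fin n) (hij : i ≠ j) (x y z : Profile n q)
    (hfx : f x = a) (hfy : f y = b) (hfz : f z = c)
    (hxy_off : ∀ k, k ≠ i → x k = y k)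
    (hxy_adj : ∃ u v : Fin q, u ≠ v ∧ x i = adjTrans u v (y i))
    (hxy_ne : x i ≠ y i)
    (hzy_off : ∀ k, k ≠ j → z k = y k)
    (hzy_adj : ∃ u v : Fin q, u ≠ v ∧ z j = adjTrans u v (y j))
    (hzy_ne : z j ≠ y j) :
    ∃ w : Profile n q, IsRManip f 3 w ∧
      (∀ k, k ≠ i → k ≠ j → w k = y k) ∧
      (Shifted c (x i) (w i) ∨ Shifted c (y i) (w i)) ∧
      (Shifted a (z j) (w j) ∨ Shifted a (y j) (w j)) := by
  obtain ⟨u, u', -, hxu⟩ := hxy_adj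
  obtain ⟨v, v', -, hzv⟩ := hzy_adj
  have hx : AdjStep (y i) (x i) := hxu ▸ adjStep_adjTrans (hxu ▸ hxy_ne)
  have hz : AdjStep (y j) (z j) := hzv ▸ adjStep_adjTrans (hzv ▸ hzy_ne)
  have hxj : x j = y j := hxy_off j hij.symm
  have hzi : z i = y i := hzy_off i hij
  rcases isRManip_of_adjStep_square (r := 3) (by norm_num) hab hbc hac hij hfx hfy hfz hxy_off
    hzy_off hx hz with h | h | h | h
  · exact ⟨x, h, fun k hk _ => hxy_off k hk, .inl (shifted_of_eq rfl),
      .inr (shifted_of_eq hxj.symm)⟩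
  · exact ⟨y, h, fun _ _ _ => rfl, .inr (shifted_of_eq rfl), .inr (shifted_of_eq rfl)⟩
  · exact ⟨z, h, fun k _ hk => hzy_off k hk, .inr (shifted_of_eq hzi.symm),
      .inl (shifted_of_eq rfl)⟩
  · refine ⟨_, h, fun k hki hkj => ?_, .inl (shifted_of_eq ?_), .inl (shifted_of_eq ?_)⟩
    · rw [Function.update_of_ne hkj, hxy_off k hki]
    · exact (Function.update_of_ne hij _ _).symm
    · exact (Function.update_self j (z j) x).symm
end
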